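/- arXiv:1110.6683 — 3 statements merged into one kernel-verified Lean document; each statement's English description precedes it below -/
import Mathlib

section
/- Let G be a finite group, N a normal subgroup of G containing a non-identity element, and χ an irreducible complex character of G. Then N contains a non-identity element x with χ(x) ≠ 0. -/
/-!
Let `T = ∑_{n ∈ N} ρ(n)`. Normality of `N` makes `T` commute with every `ρ(g)`, so by Schur's
lemma `T = c • 1`. If `c = 0`, then `∑_{n ∈ N} χ(n) = tr T = 0` while `χ(1) = dim V ≠ 0`, so some
other term of the sum is nonzero. If `c ≠ 0`, then `T ρ(m) = T` for `m ∈ N` forces `ρ(m) = 1`,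
so `χ(m) = dim V ≠ 0` for any `m ∈ N`, in particular for a non-identity one.
-/

open CategoryTheory

section SubgroupSum

variable {G A : Type*} [Group G] [Semiring A] (ρ : G →* A) (N : Subgroup G) [Fintype N]

theorem MonoidHom.commute_sum_subgroup [N.Normal] (g : G) :
    Commute (ρ g) (∑ n : N, ρ n) := by
  calc ρ g * ∑ n : N, ρ n
      = ∑ n : N, ρ (MulAut.conjNormal g n) * ρ g := by
        simp only [Finset.mul_sum, MulAut.conjNormal_apply, ← map_mul, inv_mul_cancel_right]
    _ = (∑ n : N, ρ n) * ρ g := by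
        rw [← Finset.sum_mul]
        exact congr($((MulAut.conjNormal g).toEquiv.sum_comp fun n => ρ n) * ρ g)

theorem MonoidHom.sum_subgroup_mul_of_mem {m : G} (hm : m ∈ N) :
    (∑ n : N, ρ n) * ρ m = ∑ n : N, ρ n := by
  rw [Finset.sum_mul]
  exact Fintype.sum_equiv (Equiv.mulRight (⟨m, hm⟩ : N)) _ _ fun n => (map_mul ρ (n : G) m).symm

end SubgroupSum

theorem Fintype.exists_ne_and_ne_zero_of_sum_eq_zero {ι M : Type*} [Fintype ι] [AddCommMonoid M]
    {f : ι → M} (hsum : ∑ i, f i = 0) {a : ι} (ha : f a ≠ 0) : ∃ i, i ≠ a ∧ f i ≠ 0 := by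
  by_contra! h
  exact ha (by rwa [Fintype.sum_eq_single a h] at hsum)

namespace FDRep

universe u

variable {k G : Type u} [Field k] [Monoid G]

theorem finrank_ne_zero_of_simple (V : FDRep k G) [Simple V] : Module.finrank k V ≠ 0 := by
  intro h
  have : Subsingleton V := Module.finrank_zero_iff.mp h
  refine id_nonzero V (Action.hom_ext _ _ ?_)
  ext v
  exact Subsingleton.elim _ _

theorem exists_eq_smul_one_of_commute [IsAlgClosed k] (V : FDRep k G) [Simple V]
    (T : Module.End k V) (hT : ∀ g, Commute (V.ρ g) T) : ∃ c : k, T = c • 1 := by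
  let f : V ⟶ V := ⟨FGModuleCat.ofHom T, fun g => by ext v; exact congr($((hT g).symm) v)⟩
  obtain ⟨c, hc⟩ := endomorphism_simple_eq_smul_id k f
  exact ⟨c, congr($(hc.symm).hom.hom.hom)⟩

end FDRep

/-- If `N` is a normal subgroup of a finite group `G` containing a non-identity element and
`χ` is an irreducible complex character of `G`, then `N` contains a non-identity element on
which `χ` does not vanish. -/
theorem normal_subgroup_meets_support (G : Type) [Group G] [Fintype G]
    (N : Subgroup G) [N.Normal] (hN : ∃ n ∈ N, n ≠ 1)
    (V : FDRep ℂ G) [Simple V] :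
    ∃ x ∈ N, x ≠ 1 ∧ V.character x ≠ 0 := by
  classical
  have hdim : V.character 1 ≠ 0 := by
    simpa [FDRep.char_one] using V.finrank_ne_zero_of_simple
  obtain ⟨c, hc⟩ := V.exists_eq_smul_one_of_commute _ (V.ρ.commute_sum_subgroup N)
  by_cases hc0 : c = 0
  · have hsum : ∑ n : N, V.character n = 0 := by
      simp [FDRep.character, ← map_sum, hc, hc0]
    obtain ⟨n, hn1, hn⟩ := Fintype.exists_ne_and_ne_zero_of_sum_eq_zero hsum (a := 1) hdim
    exact ⟨n, n.2, by simpa using hn1, hn⟩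
  · obtain ⟨n, hn, hn1⟩ := hN
    have hρn : V.ρ n = 1 := by
      have h := V.ρ.sum_subgroup_mul_of_mem N hn
      rw [hc, smul_mul_assoc, one_mul] at h
      exact smul_right_injective _ hc0 h
    refine ⟨n, hn, hn1, ?_⟩
    rwa [FDRep.character, hρn, ← map_one V.ρ]
end

section
/- Let (G_i)_{i∈I} be a family of finite groups, G = ⊕ G_i, and for each i let χ_i be an irreducible complex character of G_i of degree d_i. Define ω: G → ℂ by ω(x) = Π_i d_i^{-1} χ_i(x_i). Then the ℓ²-norm of ω satisfies ‖ω‖₂ = Π_{i∈I} |G_i|^{1/2}/d_i (interpreted as the supremum over finite subproducts, possibly +∞). In particular ω ∈ ℓ²(G) if and only if Π_{i∈I} |G_i|/d_i² < ∞. -/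
/-!
Write `aᵢ = dᵢ⁻¹ χᵢ`. Since `aᵢ(1) = 1`, `|ω(x)|²` is the finite product of the `|aᵢ(xᵢ)|²` over the
coordinates where `x` is non-trivial. Every finite subset of `⊕ Gᵢ` lies in a finite product
`∏_{i ∈ F} Gᵢ`, so `∑ |ω|²` is the supremum over finite `F` of
`∑_{x ∈ ∏_F Gᵢ} ∏_{i ∈ F} |aᵢ(xᵢ)|² = ∏_{i ∈ F} ∑_{g ∈ Gᵢ} |aᵢ(g)|²`, and each factor equals
`|Gᵢ|/dᵢ²` by Schur orthogonality `∑_g χ(g) χ(g⁻¹) = |G|` together with `χ(g⁻¹) = conj χ(g)`.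
-/

/-- The set of coordinates at which an element of a product of groups is non-trivial. -/
def piSupport {I : Type} {G : I → Type} [∀ i, Group (G i)] (x : ∀ i, G i) : Set I :=
  {i | x i ≠ 1}

private theorem piSupport_mul_finite {I : Type} {G : I → Type} [∀ i, Group (G i)]
    {a b : ∀ i, G i} (ha : (piSupport a).Finite) (hb : (piSupport b).Finite) :
    (piSupport (a * b)).Finite := by
  refine (ha.union hb).subset ?_
  intro i hi
  by_contra hc
  simp only [Set.mem_union, piSupport, Set.mem_setOf_eq, not_or, not_not] at hc
  exact hi (by simp [piSupport, Pi.mul_apply, hc.1, hc.2])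

/-- The restricted direct product of a family of groups: the subgroup of the full product
consisting of families that equal the identity in all but finitely many coordinates. -/
def restrictedProduct {I : Type} (G : I → Type) [∀ i, Group (G i)] :
    Subgroup (∀ i, G i) where
  carrier := {x | (piSupport x).Finite}
  one_mem' := by
    have : piSupport (1 : ∀ i, G i) = ∅ := by
      ext i; simp [piSupport]
    simp only [Set.mem_setOf_eq, this]
    exact Set.finite_empty
  mul_mem' := fun ha hb => piSupport_mul_finite ha hb
  inv_mem' := by
    intro a ha
    have : piSupport a⁻¹ = piSupport a := by
      ext i; simp [piSupport]
    simpa only [Set.mem_setOf_eq, this] using ha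

/-- The "restricted direct product" of a family of subgroups `H i ≤ G i`, viewed as a
subgroup of the full product `Π i, G i`. -/
def restrictedProductOfSubgroups {I : Type} (G : I → Type) [∀ i, Group (G i)]
    (H : ∀ i, Subgroup (G i)) : Subgroup (∀ i, G i) where
  carrier := {x | (piSupport x).Finite ∧ ∀ i, x i ∈ H i}
  one_mem' := by
    refine ⟨?_, fun i => one_mem _⟩
    have : piSupport (1 : ∀ i, G i) = ∅ := by
      ext i; simp [piSupport]
    rw [this]; exact Set.finite_empty
  mul_mem' := fun ha hb =>
    ⟨piSupport_mul_finite ha.1 hb.1, fun i => mul_mem (ha.2 i) (hb.2 i)⟩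
  inv_mem' := by
    intro a ha
    refine ⟨?_, fun i => inv_mem (ha.2 i)⟩
    have : piSupport a⁻¹ = piSupport a := by
      ext i; simp [piSupport]
    rw [this]; exact ha.1

open scoped ENNReal NNReal BigOperators
open CategoryTheory

open scoped Matrix ComplexOrder in
theorem Matrix.trace_map_inv_eq_star_trace {H n 𝕜 : Type*} [Group H] [Fintype H] [Fintype n]
    [DecidableEq n] [RCLike 𝕜] (ρ : H →* Matrix n n 𝕜) (g : H) :
    (ρ g⁻¹).trace = star (ρ g).trace := by
  -- `P` is the Gram matrix of an inner product for which every `ρ h` is unitary.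
  set P := ∑ h, (ρ h)ᴴ * ρ h
  have hP : IsUnit P.det := (Matrix.isUnit_iff_isUnit_det _).1 <| Matrix.PosDef.isUnit <|
    Matrix.posDef_sum Finset.univ_nonempty fun h _ => .conjTranspose_mul_self _ <|
      Matrix.mulVec_injective_iff_isUnit.2 <| (Group.isUnit h).map ρ
  have hinv : (ρ g)ᴴ * P * ρ g = P := by
    simp only [P, Finset.mul_sum, Finset.sum_mul, ← Matrix.mul_assoc]
    refine Fintype.sum_equiv (Equiv.mulRight g) _ _ fun h => ?_
    simp [Matrix.conjTranspose_mul, Matrix.mul_assoc]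
  have hadj : (ρ g)ᴴ * P = P * ρ g⁻¹ := by
    simpa [Matrix.mul_assoc, ← map_mul] using congrArg (· * ρ g⁻¹) hinv
  calc (ρ g⁻¹).trace = (P⁻¹ * (P * ρ g⁻¹)).trace := by
        rw [Matrix.nonsing_inv_mul_cancel_left _ _ hP]
    _ = ((ρ g)ᴴ * P * P⁻¹).trace := by rw [← hadj, Matrix.trace_mul_comm, Matrix.mul_assoc]
    _ = star (ρ g).trace := by
        rw [Matrix.mul_nonsing_inv_cancel_right _ _ hP, Matrix.trace_conjTranspose]

theorem FDRep.char_inv {k H : Type} [RCLike k] [Group H] [Fintype H] (W : FDRep k H) (g : H) :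
    W.character g⁻¹ = star (W.character g) := by
  let b := Module.finBasis k W
  let ρ : H →* Matrix (Fin _) (Fin _) k := (LinearMap.toMatrixAlgEquiv b).toMonoidHom.comp W.ρ
  simp only [FDRep.character, LinearMap.trace_eq_matrix_trace k b]
  exact Matrix.trace_map_inv_eq_star_trace ρ g

theorem FDRep.sum_nnnorm_char_sq {H : Type} [Group H] [Fintype H] (W : FDRep ℂ H) [Simple W] :
    ∑ g, ‖W.character g‖₊ ^ 2 = Fintype.card H := by
  have hcard : (Nat.card H : ℂ) ≠ 0 := Nat.cast_ne_zero.2 Nat.card_pos.ne'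
  let := invertibleOfNonzero hcard
  have h := FDRep.char_orthonormal W W
  rw [if_pos ⟨Iso.refl W⟩, inv_mul_eq_one₀ hcard, Nat.card_eq_fintype_card] at h
  apply NNReal.coe_injective
  apply Complex.ofReal_injective
  push_cast
  rw [h]
  refine Finset.sum_congr rfl fun g _ => ?_
  rw [FDRep.char_inv, Complex.star_def, Complex.mul_conj']

theorem FDRep.finrank_ne_zero {k H : Type} [Field k] [Group H] (W : FDRep k H) [Simple W] :
    Module.finrank k W ≠ 0 := by
  intro h
  have := Module.finrank_zero_iff.1 h
  exact id_nonzero W (by ext; exact Subsingleton.elim _ _)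

theorem FDRep.sum_nnnorm_inv_finrank_mul_char_sq {H : Type} [Group H] [Fintype H] (W : FDRep ℂ H)
    [Simple W] :
    ∑ g, (‖(Module.finrank ℂ W : ℂ)⁻¹ * W.character g‖₊ : ℝ≥0∞) ^ 2 =
      Fintype.card H / (Module.finrank ℂ W : ℝ≥0∞) ^ 2 := by
  have hd : (Module.finrank ℂ W : ℝ≥0) ≠ 0 := Nat.cast_ne_zero.2 W.finrank_ne_zero
  have key : ∑ g, ‖(Module.finrank ℂ W : ℂ)⁻¹ * W.character g‖₊ ^ 2 =
      Fintype.card H / (Module.finrank ℂ W : ℝ≥0) ^ 2 := by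
    simp_rw [nnnorm_mul, mul_pow, ← Finset.mul_sum, W.sum_nnnorm_char_sq, nnnorm_inv,
      div_eq_inv_mul, inv_pow, RCLike.nnnorm_natCast]
  simpa [ENNReal.coe_div (pow_ne_zero 2 hd)] using congrArg ((↑) : ℝ≥0 → ℝ≥0∞) key

namespace restrictedProduct

variable {I : Type} {G : I → Type} [∀ i, Group (G i)]

open scoped Classical in
noncomputable def extendOne (F : Finset I) (p : ∀ i : F, G i) : restrictedProduct G :=
  ⟨fun i => if h : i ∈ F then p ⟨i, h⟩ else 1,
    F.finite_toSet.subset fun _ hi => by_contra fun hiF => hi (dif_neg hiF)⟩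

theorem extendOne_apply_of_notMem {F : Finset I} (p : ∀ i : F, G i) {i : I} (hi : i ∉ F) :
    (extendOne F p).1 i = 1 :=
  dif_neg hi

theorem extendOne_apply (F : Finset I) (p : ∀ i : F, G i) (i : F) :
    (extendOne F p).1 i = p i :=
  dif_pos i.2

theorem extendOne_injective (F : Finset I) : Function.Injective (extendOne (G := G) F) :=
  fun p q h => funext fun i => by rw [← extendOne_apply F p, h, extendOne_apply]

theorem extendOne_restrict {F : Finset I} {x : restrictedProduct G} (hx : piSupport x.1 ⊆ F) :
    extendOne F (fun i => x.1 i) = x := by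
  refine Subtype.ext <| funext fun i => ?_
  by_cases hi : i ∈ F
  · exact extendOne_apply F _ ⟨i, hi⟩
  · exact (extendOne_apply_of_notMem _ hi).trans (not_not.1 fun h => hi (hx h)).symm

theorem exists_subset_range_extendOne [DecidableEq I] [∀ i, Fintype (G i)]
    (s : Finset (restrictedProduct G)) :
    ∃ F : Finset I, s ⊆ Finset.univ.map ⟨extendOne F, extendOne_injective F⟩ := by
  refine ⟨s.biUnion fun x => x.2.toFinset, fun x hx => Finset.mem_map.2
    ⟨fun i => x.1 i, Finset.mem_univ _, extendOne_restrict fun i hi => ?_⟩⟩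
  exact Finset.mem_biUnion.2 ⟨x, hx, x.2.mem_toFinset.2 hi⟩

theorem mulSupport_subset_piSupport {M : Type*} [One M] {f : ∀ i, G i → M} (hf : ∀ i, f i 1 = 1)
    (x : ∀ i, G i) : Function.mulSupport (fun i => f i (x i)) ⊆ piSupport x :=
  fun i hi hxi => hi (by simp only [hxi, hf])

theorem finprod_extendOne {M : Type*} [CommMonoid M] {f : ∀ i, G i → M} (hf : ∀ i, f i 1 = 1)
    (F : Finset I) (p : ∀ i : F, G i) :
    ∏ᶠ i, f i ((extendOne F p).1 i) = ∏ i : F, f i (p i) := by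
  rw [finprod_eq_prod_of_mulSupport_subset _ ((mulSupport_subset_piSupport hf _).trans ?_),
    ← Finset.prod_coe_sort]
  · exact Finset.prod_congr rfl fun i _ => by rw [extendOne_apply]
  · exact fun i hi => by_contra fun hiF => hi (extendOne_apply_of_notMem p hiF)

theorem tsum_finprod_eq_iSup_prod_sum [∀ i, Fintype (G i)] {f : ∀ i, G i → ℝ≥0∞}
    (hf : ∀ i, f i 1 = 1) :
    ∑' x : restrictedProduct G, ∏ᶠ i, f i (x.1 i) = ⨆ F : Finset I, ∏ i ∈ F, ∑ g, f i g := by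
  classical
  rw [ENNReal.tsum_eq_iSup_sum' _ exists_subset_range_extendOne]
  refine iSup_congr fun F => ?_
  rw [Finset.sum_map, ← Finset.prod_coe_sort, Finset.prod_univ_sum, Fintype.piFinset_univ]
  exact Finset.sum_congr rfl fun p _ => finprod_extendOne hf F p

end restrictedProduct

theorem ENNReal.coe_nnnorm_finprod_pow {ι 𝕜 : Type*} [NormedField 𝕜] {f : ι → 𝕜}
    (hf : Function.HasFiniteMulSupport f) (n : ℕ) :
    (‖∏ᶠ i, f i‖₊ : ℝ≥0∞) ^ n = ∏ᶠ i, (‖f i‖₊ : ℝ≥0∞) ^ n :=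
  ((powMonoidHom n).comp
    (ENNReal.ofNNRealHom.toMonoidHom.comp nnnormHom.toMonoidHom)).map_finprod hf

theorem memℓp_iff_tsum_nnnorm_rpow_lt_top {α : Type*} {E : α → Type*}
    [∀ i, NormedAddCommGroup (E i)] {p : ℝ≥0∞} (hp : 0 < p.toReal) {f : ∀ i, E i} :
    Memℓp f p ↔ ∑' i, (‖f i‖₊ : ℝ≥0∞) ^ p.toReal < ∞ := by
  simp_rw [memℓp_gen_iff hp, lt_top_iff_ne_top, ← ENNReal.coe_rpow_of_nonneg _ hp.le,
    ENNReal.tsum_coe_ne_top_iff_summable, ← NNReal.summable_coe, NNReal.coe_rpow, coe_nnnorm]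

/-- For a restricted direct product `G = ⊕ᵢ Gᵢ` of finite groups and irreducible complex
characters `χᵢ` of `Gᵢ` of degree `dᵢ`, the function `ω(x) = Πᵢ dᵢ⁻¹ χᵢ(xᵢ)` satisfies
`‖ω‖₂² = Πᵢ |Gᵢ|/dᵢ²` (as a supremum over finite subproducts, possibly `+∞`); in
particular `ω ∈ ℓ²(G)` iff `Πᵢ |Gᵢ|/dᵢ² < ∞`. -/
theorem l2_norm_of_character_of_restrictedProduct (I : Type) (G : I → Type)
    [∀ i, Group (G i)] [∀ i, Fintype (G i)]
    (V : ∀ i, FDRep ℂ (G i)) [∀ i, Simple (V i)]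
    (ω : ↥(restrictedProduct G) → ℂ)
    (hω : ∀ x : ↥(restrictedProduct G),
      ω x = ∏ᶠ i, ((Module.finrank ℂ (V i) : ℂ))⁻¹ * (V i).character (x.1 i)) :
    (∑' x : ↥(restrictedProduct G), ((‖ω x‖₊ : ℝ≥0∞) ^ (2 : ℝ)) =
      ⨆ F : Finset I, ∏ i ∈ F,
        (Fintype.card (G i) : ℝ≥0∞) / ((Module.finrank ℂ (V i) : ℝ≥0∞)) ^ (2 : ℕ)) ∧
    (Memℓp ω 2 ↔
      (⨆ F : Finset I, ∏ i ∈ F,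
        (Fintype.card (G i) : ℝ≥0∞) / ((Module.finrank ℂ (V i) : ℝ≥0∞)) ^ (2 : ℕ)) < ⊤) := by
  set a : ∀ i, G i → ℂ := fun i g => (Module.finrank ℂ (V i) : ℂ)⁻¹ * (V i).character g
  have ha : ∀ i, a i 1 = 1 := fun i => by simp [a, FDRep.char_one, (V i).finrank_ne_zero]
  have hnorm : ∀ x : restrictedProduct G,
      (‖ω x‖₊ : ℝ≥0∞) ^ (2 : ℝ) = ∏ᶠ i, (‖a i (x.1 i)‖₊ : ℝ≥0∞) ^ 2 := fun x => by
    rw [ENNReal.rpow_two, hω, ENNReal.coe_nnnorm_finprod_pow]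
    exact x.2.subset (restrictedProduct.mulSupport_subset_piSupport ha x.1)
  have hsum : ∑' x : restrictedProduct G, (‖ω x‖₊ : ℝ≥0∞) ^ (2 : ℝ) =
      ⨆ F : Finset I, ∏ i ∈ F, ∑ g, (‖a i g‖₊ : ℝ≥0∞) ^ 2 := by
    simp_rw [hnorm]
    exact restrictedProduct.tsum_finprod_eq_iSup_prod_sum
      (f := fun i g => (‖a i g‖₊ : ℝ≥0∞) ^ 2) fun i => by simp [ha]
  simp_rw [a, FDRep.sum_nnnorm_inv_finrank_mul_char_sq] at hsum
  refine ⟨hsum, ?_⟩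
  rw [memℓp_iff_tsum_nnnorm_rpow_lt_top (by norm_num), ENNReal.toReal_ofNat, hsum]
end

section
/- Let (G_i)_{i∈I} be a family of finite groups with each |G_i| ≥ 2, G = ⊕ G_i, and for each i let χ_i be an irreducible character of G_i of degree d_i. Define the maximal character ratio mcr(χ_i) = max{ d_i^{-1}|χ_i(g)| : g ∈ G_i \ {e} }, and ω: G → ℂ by ω(x) = Π_i d_i^{-1} χ_i(x_i). Then ω ∈ c₀(G) (i.e., for every ε > 0 the set {x ∈ G : |ω(x)| ≥ ε} is finite) if and only if for every ε > 0 the set {i ∈ I : mcr(χ_i) ≥ ε} is finite. -/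
open scoped ENNReal NNReal BigOperators
open CategoryTheory

/-!
Every eigenvalue of `ρ(g)` is a root of unity, so `|χ(g)| ≤ d`, and the normalised factors
`fᵢ = dᵢ⁻¹ χᵢ` satisfy `fᵢ(1) = 1` and `‖fᵢ‖ ≤ 1`. Hence `‖ω(x)‖ ≤ ‖fᵢ(xᵢ)‖ ≤ mcr(χᵢ)` for every
`i` in the support of `x`: if `‖ω(x)‖ ≥ ε` then `x` is supported in the finite set
`{i | mcr(χᵢ) ≥ ε}`, and there are only finitely many such `x`. Conversely, if `gᵢ ≠ 1` attains
`mcr(χᵢ)`, then `ω` takes the value of norm `mcr(χᵢ)` at the element concentrated at `gᵢ` in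
coordinate `i`, and these elements are pairwise distinct.
-/

open Module

theorem Module.End.norm_trace_le_finrank_of_isOfFinOrder {V : Type*} [AddCommGroup V]
    [Module ℂ V] [FiniteDimensional ℂ V] {f : End ℂ V} (hf : IsOfFinOrder f) :
    ‖LinearMap.trace ℂ V f‖ ≤ finrank ℂ V := by
  obtain ⟨n, hn, hfn⟩ := isOfFinOrder_iff_pow_eq_one.1 hf
  have hroots : ∀ μ ∈ f.charpoly.roots, ‖μ‖ ≤ 1 := by
    intro μ hμ
    obtain ⟨v, hv⟩ := ((End.hasEigenvalue_iff_isRoot_charpoly f μ).2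
      (Polynomial.isRoot_of_mem_roots hμ)).exists_hasEigenvector
    have hμn : μ ^ n • v = v := by rw [← hv.pow_apply, hfn, End.one_apply]
    have : μ ^ n = 1 := smul_left_injective ℂ hv.2 (by simpa using hμn)
    exact (Complex.norm_eq_one_of_pow_eq_one this hn.ne').le
  calc ‖LinearMap.trace ℂ V f‖ = ‖f.charpoly.roots.sum‖ := by
        rw [End.trace_eq_sum_roots_charpoly_of_splits (IsAlgClosed.splits _)]
    _ ≤ (f.charpoly.roots.map norm).sum := norm_multiset_sum_le _
    _ ≤ Multiset.card f.charpoly.roots • (1 : ℝ) := by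
        simpa using Multiset.sum_le_card_nsmul (f.charpoly.roots.map norm) 1
          (Multiset.forall_mem_map_iff.2 hroots)
    _ ≤ finrank ℂ V := by
        rw [nsmul_one, ← LinearMap.charpoly_natDegree f]
        exact_mod_cast f.charpoly.card_roots'

theorem FDRep.norm_character_le_finrank {G : Type*} [Group G] [Finite G] (V : FDRep ℂ G)
    (g : G) : ‖V.character g‖ ≤ finrank ℂ V :=
  End.norm_trace_le_finrank_of_isOfFinOrder (V.ρ.isOfFinOrder (isOfFinOrder_of_finite g))

theorem FDRep.finrank_pos_of_simple {G : Type*} [Group G] (V : FDRep ℂ G) [Simple V] :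
    0 < finrank ℂ V := by
  refine Nat.pos_of_ne_zero fun h => id_nonzero V ?_
  have : Subsingleton V := finrank_zero_iff.1 h
  ext x
  exact Subsingleton.elim _ _

open Function

section RestrictedProduct

variable {I : Type} {G : I → Type} [∀ i, Group (G i)]

theorem mulSingle_mem_restrictedProduct [DecidableEq I] (i : I) (g : G i) :
    Pi.mulSingle i g ∈ restrictedProduct G :=
  (Set.finite_singleton i).subset fun _ hj =>
    by_contra fun hji => hj (Pi.mulSingle_eq_of_ne hji g)

theorem finprod_mulSingle_comp {M : Type*} [CommMonoid M] {f : ∀ i, G i → M}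
    (hf : ∀ i, f i 1 = 1) [DecidableEq I] (i : I) (g : G i) :
    ∏ᶠ j, f j (Pi.mulSingle i g j) = f i g :=
  (finprod_eq_single _ i fun j hj => by rw [Pi.mulSingle_eq_of_ne hj, hf]).trans (by simp)

theorem finite_setOf_piSupport_subset [∀ i, Finite (G i)] {S : Set I} (hS : S.Finite) :
    {x : ∀ i, G i | piSupport x ⊆ S}.Finite := by
  have : Finite S := hS
  refine Set.Finite.of_finite_image (f := fun x (j : S) => x j) (Set.toFinite _) ?_
  intro x hx y hy hxy
  funext j
  by_cases hj : j ∈ S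
  · exact congrFun hxy ⟨j, hj⟩
  · rw [of_not_not (mt (@hx j) hj), of_not_not (mt (@hy j) hj)]

variable [∀ i, Finite (G i)] {R : Type*} [NormedCommRing R] {f : ∀ i, G i → R}

theorem finite_setOf_le_iSup_norm (hf : ∀ i, f i 1 = 1) {ε : ℝ} (hε : 0 < ε)
    (h : {x : restrictedProduct G | ε ≤ ‖∏ᶠ i, f i (x.1 i)‖}.Finite) :
    {i | ε ≤ ⨆ g : {g : G i // g ≠ 1}, ‖f i g‖}.Finite := by
  classical
  have hwit : ∀ i, ε ≤ ⨆ g : {g : G i // g ≠ 1}, ‖f i g‖ → ∃ g : G i, g ≠ 1 ∧ ε ≤ ‖f i g‖ := by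
    intro i hi
    -- an empty supremum is `0` in `ℝ`, so `ε ≤ ⨆ …` forces some `g ≠ 1`
    have : Nonempty {g : G i // g ≠ 1} := by
      by_contra hempty
      rw [not_nonempty_iff] at hempty
      rw [Real.iSup_of_isEmpty] at hi
      exact hi.not_gt hε
    obtain ⟨g, hg⟩ := exists_eq_ciSup_of_finite (f := fun g : {g : G i // g ≠ 1} => ‖f i g‖)
    exact ⟨g, g.2, hg ▸ hi⟩
  choose! g hg1 hgε using hwit
  let x (i : I) : restrictedProduct G :=
    ⟨Pi.mulSingle i (g i), mulSingle_mem_restrictedProduct i (g i)⟩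
  refine Set.Finite.of_finite_image (f := x) (h.subset ?_) ?_
  · rintro _ ⟨i, hi, rfl⟩
    simpa [x, finprod_mulSingle_comp hf] using hgε i hi
  · intro i hi j _ hij
    by_contra hne
    refine hg1 i hi ?_
    simpa [x, Pi.mulSingle_eq_of_ne hne] using congrFun (congrArg Subtype.val hij) i

variable [NormOneClass R]

theorem norm_finprod_le_norm_apply {u : I → R} (hu : (mulSupport u).Finite)
    (hle : ∀ j, ‖u j‖ ≤ 1) (i : I) : ‖∏ᶠ j, u j‖ ≤ ‖u i‖ := by
  classical
  set s := insert i hu.toFinset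
  have hi : i ∈ s := Finset.mem_insert_self i _
  rw [finprod_eq_prod_of_mulSupport_subset u (s := s) (by simp [s]), ← Finset.mul_prod_erase s u hi]
  calc ‖u i * ∏ j ∈ s.erase i, u j‖ ≤ ‖u i‖ * ∏ j ∈ s.erase i, ‖u j‖ :=
        (norm_mul_le _ _).trans (by gcongr; exact Finset.norm_prod_le (s.erase i) u)
    _ ≤ ‖u i‖ * 1 := by gcongr; exact Finset.prod_le_one (fun _ _ => norm_nonneg _) fun j _ => hle j
    _ = ‖u i‖ := mul_one _

theorem finite_setOf_le_norm_finprod (hf : ∀ i, f i 1 = 1) (hle : ∀ i g, ‖f i g‖ ≤ 1) {ε : ℝ}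
    (h : {i | ε ≤ ⨆ g : {g : G i // g ≠ 1}, ‖f i g‖}.Finite) :
    {x : restrictedProduct G | ε ≤ ‖∏ᶠ i, f i (x.1 i)‖}.Finite := by
  refine ((finite_setOf_piSupport_subset h).preimage Subtype.val_injective.injOn).subset ?_
  intro x hx i hi
  have hsupp : (mulSupport fun j => f j (x.1 j)).Finite :=
    x.2.subset fun j hj hxj => hj (by simp only [hxj, hf])
  calc ε ≤ ‖∏ᶠ j, f j (x.1 j)‖ := hx
    _ ≤ ‖f i (x.1 i)‖ := norm_finprod_le_norm_apply hsupp (fun j => hle j _) i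
    _ ≤ ⨆ g : {g : G i // g ≠ 1}, ‖f i g‖ :=
      le_ciSup (f := fun g : {g : G i // g ≠ 1} => ‖f i g‖)
        ⟨1, Set.forall_mem_range.2 fun g => hle i g⟩ ⟨x.1 i, hi⟩

theorem forall_finite_setOf_le_norm_finprod_iff (hf : ∀ i, f i 1 = 1) (hle : ∀ i g, ‖f i g‖ ≤ 1) :
    (∀ ε : ℝ, 0 < ε → {x : restrictedProduct G | ε ≤ ‖∏ᶠ i, f i (x.1 i)‖}.Finite) ↔
      ∀ ε : ℝ, 0 < ε → {i | ε ≤ ⨆ g : {g : G i // g ≠ 1}, ‖f i g‖}.Finite :=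
  ⟨fun h ε hε => finite_setOf_le_iSup_norm hf hε (h ε hε),
    fun h ε hε => finite_setOf_le_norm_finprod hf hle (h ε hε)⟩

end RestrictedProduct

theorem c0_iff_mcr_c0_general (I : Type) (G : I → Type)
    [∀ i, Group (G i)] [∀ i, Fintype (G i)]
    (V : ∀ i, FDRep ℂ (G i)) [∀ i, Simple (V i)]
    (ω : ↥(restrictedProduct G) → ℂ)
    (hω : ∀ x : ↥(restrictedProduct G),
      ω x = ∏ᶠ i, ((Module.finrank ℂ (V i) : ℂ))⁻¹ * (V i).character (x.1 i))
    (m : I → ℝ)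
    (hm : ∀ i, m i = ⨆ g : {g : G i // g ≠ 1},
      ‖(V i).character g‖ / (Module.finrank ℂ (V i) : ℝ)) :
    (∀ ε : ℝ, 0 < ε → {x : ↥(restrictedProduct G) | ε ≤ ‖ω x‖}.Finite) ↔
      (∀ ε : ℝ, 0 < ε → {i : I | ε ≤ m i}.Finite) := by
  have hd (i : I) : (0 : ℝ) < finrank ℂ (V i) := by exact_mod_cast (V i).finrank_pos_of_simple
  set f : ∀ i, G i → ℂ := fun i g => ((finrank ℂ (V i) : ℂ))⁻¹ * (V i).character g
  have hnorm (i : I) (g : G i) : ‖f i g‖ = ‖(V i).character g‖ / finrank ℂ (V i) := by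
    simp [f, div_eq_inv_mul]
  obtain rfl : ω = fun x => ∏ᶠ i, f i (x.1 i) := funext hω
  obtain rfl : m = fun i => ⨆ g : {g : G i // g ≠ 1}, ‖f i g‖ :=
    funext fun i => by simp only [hm, hnorm]
  refine forall_finite_setOf_le_norm_finprod_iff (fun i => ?_) (fun i g => ?_)
  · simp only [f, FDRep.char_one]
    exact inv_mul_cancel₀ (by exact_mod_cast (hd i).ne')
  · rw [hnorm, div_le_one (hd i)]
    exact (V i).norm_character_le_finrank g

/-- For a restricted direct product `G = ⊕ᵢ Gᵢ` of nontrivial finite groups and irreducible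
characters `χᵢ` of `Gᵢ`, the associated function `ω(x) = Πᵢ dᵢ⁻¹ χᵢ(xᵢ)` vanishes at
infinity (lies in `c₀(G)`) if and only if the maximal character ratios
`mcr(χᵢ) = max_{g ≠ e} dᵢ⁻¹|χᵢ(g)|` tend to `0` along `I` (each set `{i | mcr(χᵢ) ≥ ε}`
is finite). -/
theorem c0_iff_mcr_c0 (I : Type) (G : I → Type)
    [∀ i, Group (G i)] [∀ i, Fintype (G i)] [∀ i, Nontrivial (G i)]
    (V : ∀ i, FDRep ℂ (G i)) [∀ i, Simple (V i)]
    (ω : ↥(restrictedProduct G) → ℂ)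
    (hω : ∀ x : ↥(restrictedProduct G),
      ω x = ∏ᶠ i, ((Module.finrank ℂ (V i) : ℂ))⁻¹ * (V i).character (x.1 i))
    (m : I → ℝ)
    (hm : ∀ i, m i = ⨆ g : {g : G i // g ≠ 1},
      ‖(V i).character g‖ / (Module.finrank ℂ (V i) : ℝ)) :
    (∀ ε : ℝ, 0 < ε → {x : ↥(restrictedProduct G) | ε ≤ ‖ω x‖}.Finite) ↔
      (∀ ε : ℝ, 0 < ε → {i : I | ε ≤ m i}.Finite) :=
  c0_iff_mcr_c0_general I G V ω hω m hm
end
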